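/- There exists δ > 0 such that the family {S₁, S₂} is a δ-gap synergistic family adapted to φ: for every q ∈ {1,2} and every z ∈ S¹ with z ≠ (1,0) at which the manifold differential (mfderiv) of the warped cost φ̃_q := φ∘S_q vanishes, there exists p ∈ {1,2} with φ̃_p(z) + δ < φ̃_q(z). -/

import Mathlib

open scoped Manifold

instance : Fact (Module.finrank ℝ (EuclideanSpace ℝ (Fin 2)) = 1 + 1) :=
  ⟨finrank_euclideanSpace_fin⟩

/-- Application of a `2 × 2` real matrix to a vector of Euclidean 2-space by
matrix-vector multiplication. -/
noncomputable def matApp2 (A : Matrix (Fin 2) (Fin 2) ℝ)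
    (z : EuclideanSpace ℝ (Fin 2)) : EuclideanSpace ℝ (Fin 2) :=
  Matrix.toEuclideanLin A z

/-- The cost `φ(z) = 1 − z₁` on the ambient plane. -/
noncomputable def phiAmb (w : EuclideanSpace ℝ (Fin 2)) : ℝ := 1 - w 0

/-- The rotation generator `Ψ = !![0, -1; 1, 0]`. -/
noncomputable def PsiMat : Matrix (Fin 2) (Fin 2) ℝ := !![0, -1; 1, 0]

/-- The gains `k₁ = 1/2`, `k₂ = −1/2`. -/
noncomputable def kGain : Fin 2 → ℝ := ![1 / 2, -(1 / 2)]

/-- The warping map `S_q` (with `γ = 1` and `α(r) = r²`): `S_q(z) = z` if `φ(z) ≤ 1`,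
and `S_q(z) = exp(k_q·(φ(z)−1)²·Ψ)·z` otherwise; it preserves the unit circle since `Ψ`
is skew-symmetric. -/
noncomputable def SWarp (q : Fin 2) (w : EuclideanSpace ℝ (Fin 2)) :
    EuclideanSpace ℝ (Fin 2) :=
  if phiAmb w ≤ 1 then w
  else matApp2 (NormedSpace.exp ((kGain q * (phiAmb w - 1) ^ 2) • PsiMat)) w

/-- The warped cost `φ̃_q = φ ∘ S_q` as a function on the unit circle `S¹`. -/
noncomputable def phiWarp (q : Fin 2)
    (z : Metric.sphere (0 : EuclideanSpace ℝ (Fin 2)) 1) : ℝ :=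
  phiAmb (SWarp q (z : EuclideanSpace ℝ (Fin 2)))

/-- The minimizer `(1, 0)` of `φ` on the circle. -/
noncomputable def pPlus : EuclideanSpace ℝ (Fin 2) := (WithLp.equiv 2 (Fin 2 → ℝ)).symm ![1, 0]

/-!
Write `z = (cos θ, sin θ)`. Since `S_q` rotates by `β = k_q min(cos θ, 0)²`, the warped cost is
`φ̃_q(z) = 1 - cos (θ + β)`, with `θ`-derivative `sin (θ + β) (1 + dβ/dθ)`, and
`|dβ/dθ| ≤ |k_q| |sin 2θ| ≤ 1/2`. So critical points satisfy `sin (θ + β) = 0`. If `cos θ ≥ 0`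
then `β = 0` and `z = (1, 0)`. Otherwise `|β| ≤ 1/2` forces `cos (θ + β) = -1`, i.e.
`φ̃_q(z) = 2`, while the opposite gain rotates by `-β` and gives `φ̃_p(z) = 1 + cos 2β`. Now
`cos θ = -cos β` turns `β = k_q cos² θ` into the fixed-point equation `β = k_q cos² β`, which keeps
`|β|` away from `0`, so `1 - cos 2β > 1/10`.
-/

open Real

local notation "𝔼²" => EuclideanSpace ℝ (Fin 2)
local notation "𝕊¹" => Metric.sphere (0 : EuclideanSpace ℝ (Fin 2)) 1

section
attribute [local instance] Matrix.linftyOpNormedRing Matrix.linftyOpNormedAlgebra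

theorem exp_smul_PsiMat (s : ℝ) :
    NormedSpace.exp (s • PsiMat) = !![cos s, -sin s; sin s, cos s] := by
  let L := Algebra.leftMulMatrix Complex.basisOneI
  have hL : Continuous L := L.toLinearMap.continuous_of_finiteDimensional
  have hPsi : s • PsiMat = L (s * Complex.I) := by
    rw [Algebra.leftMulMatrix_complex]
    ext i j; fin_cases i <;> fin_cases j <;> simp [PsiMat]
  rw [hPsi]
  -- `map_exp` is stated for the operator-norm topology, which is only definitionally the product one
  erw [← NormedSpace.map_exp L hL]
  rw [← Complex.exp_eq_exp_ℂ, Complex.exp_mul_I, Algebra.leftMulMatrix_complex]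
  simp [← Complex.ofReal_cos, ← Complex.ofReal_sin]

end

/-- The rotation angle `k_q α(φ(z) − γ)` of `S_q` in terms of `x = z₁` (so `φ(z) − γ = −x`),
extended by `0` to `φ(z) ≤ γ`, where `S_q` is the identity. -/
def warpAngle (k x : ℝ) : ℝ := k * min x 0 ^ 2

theorem hasDerivAt_min_zero_sq (x : ℝ) :
    HasDerivAt (fun y : ℝ => min y 0 ^ 2) (2 * min x 0) x := by
  rcases lt_trichotomy x 0 with hx | rfl | hx
  · refine ((hasDerivAt_pow 2 x).congr_of_eventuallyEq ?_).congr_deriv (by simp [hx.le])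
    filter_upwards [eventually_lt_nhds hx] with y hy
    rw [min_eq_left hy.le]
  · rw [hasDerivAt_iff_isLittleO_nhds_zero]
    refine Asymptotics.IsBigO.trans_isLittleO ?_ (Asymptotics.isLittleO_pow_id one_lt_two)
    refine Asymptotics.IsBigO.of_bound 1 (Filter.Eventually.of_forall fun y => ?_)
    rcases le_total y 0 with hy | hy <;> simp [hy]
  · refine ((hasDerivAt_const x (0 : ℝ)).congr_of_eventuallyEq ?_).congr_deriv (by simp [hx.le])
    filter_upwards [eventually_gt_nhds hx] with y hy
    simp [hy.le]

theorem hasDerivAt_warpAngle (k x : ℝ) : HasDerivAt (warpAngle k) (k * (2 * min x 0)) x :=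
  (hasDerivAt_min_zero_sq x).const_mul k

theorem phiAmb_SWarp (q : Fin 2) (w : 𝔼²) :
    phiAmb (SWarp q w) =
      1 - (cos (warpAngle (kGain q) (w 0)) * w 0 - sin (warpAngle (kGain q) (w 0)) * w 1) := by
  unfold SWarp
  split_ifs with h
  · have hw : min (w 0) 0 = 0 := min_eq_right (by linarith [show 1 - w 0 ≤ 1 from h])
    simp [warpAngle, hw, phiAmb]
  · have hw : (phiAmb w - 1) ^ 2 = min (w 0) 0 ^ 2 := by
      rw [min_eq_left (by linarith [show ¬(1 - w 0 ≤ 1) from h])]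
      simp only [phiAmb]; ring
    rw [hw, ← warpAngle, exp_smul_PsiMat]
    simp [phiAmb, matApp2, Matrix.toLpLin_apply, dotProduct]
    ring

theorem differentiable_phiAmb_SWarp (q : Fin 2) :
    Differentiable ℝ (fun w => phiAmb (SWarp q w)) := by
  simp_rw [phiAmb_SWarp]
  have hβ : Differentiable ℝ (warpAngle (kGain q)) :=
    fun x => (hasDerivAt_warpAngle _ x).differentiableAt
  fun_prop

theorem mdifferentiable_phiWarp (q : Fin 2) : MDifferentiable (𝓡 1) 𝓘(ℝ, ℝ) (phiWarp q) :=
  (differentiable_phiAmb_SWarp q).mdifferentiable.comp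
    ((contMDiff_coe_sphere (m := 1)).mdifferentiable one_ne_zero)

noncomputable def circlePt (θ : ℝ) : 𝕊¹ :=
  ⟨!₂[cos θ, sin θ], by simp [EuclideanSpace.norm_eq, Fin.sum_univ_two]⟩

theorem contMDiff_circlePt : ContMDiff 𝓘(ℝ, ℝ) (𝓡 1) ⊤ circlePt := by
  refine ContMDiff.codRestrict_sphere (f := fun θ => !₂[cos θ, sin θ]) ?_ _
  rw [contMDiff_iff_contDiff, contDiff_piLp]
  intro i; fin_cases i <;> simp <;> fun_prop

theorem exists_circlePt_eq (z : 𝕊¹) : ∃ θ, circlePt θ = z := by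
  set c : ℂ := ⟨(z : 𝔼²) 0, (z : 𝔼²) 1⟩
  have hc : ‖c‖ = 1 := by
    have hz := EuclideanSpace.norm_sq_eq (z : 𝔼²)
    rw [norm_eq_of_mem_sphere, Fin.sum_univ_two] at hz
    rw [Complex.norm_def, Complex.normSq_apply, sqrt_eq_one]
    simpa [← sq] using hz.symm
  refine ⟨Complex.arg c, Subtype.ext ?_⟩
  ext i; fin_cases i
  · simp [circlePt, Complex.cos_arg (norm_ne_zero_iff.mp (hc.symm ▸ one_ne_zero)), hc, c]
  · simp [circlePt, Complex.sin_arg, hc, c]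

theorem phiWarp_circlePt (q : Fin 2) (θ : ℝ) :
    phiWarp q (circlePt θ) = 1 - cos (θ + warpAngle (kGain q) (cos θ)) := by
  simp [phiWarp, phiAmb_SWarp, circlePt, cos_add]
  ring

theorem hasDerivAt_phiWarp_circlePt (q : Fin 2) (θ : ℝ) :
    HasDerivAt (phiWarp q ∘ circlePt)
      (sin (θ + warpAngle (kGain q) (cos θ)) * (1 - kGain q * (2 * min (cos θ) 0) * sin θ)) θ := by
  rw [show phiWarp q ∘ circlePt = _ from funext (phiWarp_circlePt q)]
  have hβ : HasDerivAt (fun t => warpAngle (kGain q) (cos t)) _ θ :=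
    (hasDerivAt_warpAngle (kGain q) (cos θ)).comp θ (hasDerivAt_cos θ)
  refine (((hasDerivAt_id' θ).add hβ).cos.const_sub 1).congr_deriv ?_
  simp only [Pi.add_apply]
  ring

theorem HasDerivAt.eq_zero_of_mfderiv_eq_zero {E H M : Type*} [NormedAddCommGroup E]
    [NormedSpace ℝ E] [TopologicalSpace H] {I : ModelWithCorners ℝ E H} [TopologicalSpace M]
    [ChartedSpace H M] {f : M → ℝ} {γ : ℝ → M} {t d : ℝ}
    (hd : HasDerivAt (f ∘ γ) d t) (hf : MDifferentiableAt I 𝓘(ℝ, ℝ) f (γ t))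
    (hγ : MDifferentiableAt 𝓘(ℝ, ℝ) I γ t) (h0 : mfderiv I 𝓘(ℝ, ℝ) f (γ t) = 0) : d = 0 := by
  have h := mfderiv_comp t hf hγ
  rw [h0, ContinuousLinearMap.zero_comp, mfderiv_eq_fderiv, hd.hasFDerivAt.fderiv] at h
  exact (ContinuousLinearMap.toSpanSingleton_apply_one (R₁ := ℝ) d).symm.trans
    (congrArg (· 1) h)

theorem one_sub_mul_min_cos_mul_sin_pos {k : ℝ} (hk : |k| ≤ 1 / 2) (θ : ℝ) :
    0 < 1 - k * (2 * min (cos θ) 0) * sin θ := by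
  have hcs : |2 * min (cos θ) 0 * sin θ| ≤ 1 := by
    rcases le_total (cos θ) 0 with hc | hc
    · have := abs_sin_le_one (2 * θ)
      rwa [sin_two_mul, mul_assoc, mul_comm (sin θ), ← min_eq_left hc, ← mul_assoc] at this
    · simp [min_eq_right hc]
  have hprod : |k * (2 * min (cos θ) 0) * sin θ| ≤ 1 / 2 := by
    rw [mul_assoc, abs_mul]
    nlinarith [abs_nonneg k, abs_nonneg (2 * min (cos θ) 0 * sin θ)]
  linarith [le_abs_self (k * (2 * min (cos θ) 0) * sin θ)]

theorem abs_kGain (q : Fin 2) : |kGain q| = 1 / 2 := by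
  fin_cases q <;> norm_num [kGain]

theorem kGain_add_one (q : Fin 2) : kGain (q + 1) = -kGain q := by
  fin_cases q <;> norm_num [kGain, show (1 : Fin 2) + 1 = 0 from rfl]

theorem sin_add_warpAngle_eq_zero {q : Fin 2} {θ : ℝ}
    (h : mfderiv (𝓡 1) 𝓘(ℝ, ℝ) (phiWarp q) (circlePt θ) = 0) :
    sin (θ + warpAngle (kGain q) (cos θ)) = 0 := by
  have hd := (hasDerivAt_phiWarp_circlePt q θ).eq_zero_of_mfderiv_eq_zero
    (mdifferentiable_phiWarp q _) (contMDiff_circlePt.mdifferentiableAt (by simp)) h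
  exact (mul_eq_zero.mp hd).resolve_right (one_sub_mul_min_cos_mul_sin_pos (abs_kGain q).le θ).ne'

theorem circlePt_eq_pPlus {k θ : ℝ} (hc : 0 ≤ cos θ) (h : sin (θ + warpAngle k (cos θ)) = 0) :
    (circlePt θ : 𝔼²) = pPlus := by
  have hs : sin θ = 0 := by simpa [warpAngle, min_eq_right hc] using h
  have hc1 : cos θ = 1 := by nlinarith [sin_sq_add_cos_sq θ]
  ext i; fin_cases i <;> simp [circlePt, pPlus, hs, hc1]

theorem cos_add_eq_neg_one {θ β : ℝ} (hc : cos θ < 0) (hβ : |β| ≤ 1 / 2)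
    (h : sin (θ + β) = 0) : cos (θ + β) = -1 := by
  have hcosβ : 0 < cos β := cos_pos_of_mem_Ioo
    ⟨by linarith [neg_abs_le β, pi_gt_three], by linarith [le_abs_self β, pi_gt_three]⟩
  have hsin : |sin θ * sin β| ≤ 1 / 2 := by
    rw [abs_mul]
    nlinarith [abs_sin_le_one θ, abs_sin_le_abs (x := β), abs_nonneg (sin β)]
  have hlt : cos (θ + β) < 1 := by
    rw [cos_add]
    linarith [neg_abs_le (sin θ * sin β), mul_neg_of_neg_of_pos hc hcosβ]
  have hsq : cos (θ + β) * cos (θ + β) = 1 := by nlinarith [sin_sq_add_cos_sq (θ + β)]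
  exact (mul_self_eq_one_iff.mp hsq).resolve_left hlt.ne

theorem le_sq_of_eq_mul_cos_sq {k β : ℝ} (hk : |k| = 1 / 2) (hβ : β = k * cos β ^ 2) :
    (7 / 8) ^ 4 / 4 ≤ β ^ 2 := by
  have hk2 : k ^ 2 = 1 / 4 := by rw [← sq_abs, hk]; norm_num
  have hβ2 : β ^ 2 = cos β ^ 4 / 4 := calc
    β ^ 2 = (k * cos β ^ 2) ^ 2 := by rw [← hβ]
    _ = cos β ^ 4 / 4 := by linear_combination cos β ^ 4 * hk2
  have hβ2' : β ^ 2 ≤ 1 / 4 := by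
    rw [hβ2]; nlinarith [cos_sq_le_one β, sq_nonneg (cos β)]
  have hcos : 7 / 8 ≤ cos β := by nlinarith [one_sub_sq_div_two_le_cos (x := β)]
  rw [hβ2]
  gcongr

theorem one_tenth_lt_one_sub_cos_two_mul {β : ℝ} (hβ : (7 / 8) ^ 4 / 4 ≤ β ^ 2)
    (hβ' : |β| ≤ 1 / 2) : 1 / 10 < 1 - cos (2 * β) := by
  have h2β : |2 * β| ≤ π := by
    rw [abs_mul, abs_two]; linarith [pi_gt_three]
  have hpi : 1 / 5 ≤ 2 / π ^ 2 := by
    rw [div_le_div_iff₀ (by norm_num) (by positivity)]; nlinarith [pi_lt_d2, pi_pos]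
  nlinarith [cos_le_one_sub_mul_cos_sq h2β]

theorem one_sub_cos_add_warpAngle_neg_lt {k θ : ℝ} (hk : |k| = 1 / 2) (hc : cos θ < 0)
    (h : sin (θ + warpAngle k (cos θ)) = 0) :
    1 - cos (θ + warpAngle (-k) (cos θ)) + 1 / 10 < 1 - cos (θ + warpAngle k (cos θ)) := by
  set β := warpAngle k (cos θ)
  have hneg : warpAngle (-k) (cos θ) = -β := by simp only [β, warpAngle]; ring
  have hβk : β = k * cos θ ^ 2 := by simp [β, warpAngle, min_eq_left hc.le]
  have hβ' : |β| ≤ 1 / 2 := by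
    rw [hβk, abs_mul, hk, abs_of_nonneg (sq_nonneg _)]; nlinarith [cos_sq_le_one θ]
  have hcos_add := cos_add_eq_neg_one hc hβ' h
  have hcosθ : cos θ = -cos β := by
    rw [show θ = (θ + β) - β by ring, cos_sub, hcos_add, h]; ring
  have hcos_sub : cos (θ - β) = -cos (2 * β) := by
    rw [show θ - β = (θ + β) - 2 * β by ring, cos_sub, hcos_add, h]; ring
  have hfix : β = k * cos β ^ 2 := by rw [← neg_sq, ← hcosθ]; exact hβk
  have hgap := one_tenth_lt_one_sub_cos_two_mul (le_sq_of_eq_mul_cos_sq hk hfix) hβ'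
  rw [hneg, ← sub_eq_add_neg, hcos_sub, hcos_add]
  linarith

/-- There exists `δ > 0` such that `{S₁, S₂}` is a `δ`-gap synergistic
family adapted to `φ(z) = 1 − z₁` on `S¹`: for every `q ∈ {1,2}` and every `z ∈ S¹` with
`z ≠ (1,0)` at which the manifold differential of `φ̃_q = φ ∘ S_q` vanishes, there exists
`p ∈ {1,2}` with `φ̃_p(z) + δ < φ̃_q(z)`. -/
theorem stmt15 :
    ∃ δ : ℝ, 0 < δ ∧
      ∀ q : Fin 2, ∀ z : Metric.sphere (0 : EuclideanSpace ℝ (Fin 2)) 1,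
        (z : EuclideanSpace ℝ (Fin 2)) ≠ pPlus →
        mfderiv (𝓡 1) 𝓘(ℝ, ℝ) (phiWarp q) z = 0 →
        ∃ p : Fin 2, phiWarp p z + δ < phiWarp q z := by
  refine ⟨1 / 10, by norm_num, fun q z hz hcrit => ?_⟩
  obtain ⟨θ, rfl⟩ := exists_circlePt_eq z
  have hs := sin_add_warpAngle_eq_zero hcrit
  rcases le_or_gt 0 (cos θ) with hc | hc
  · exact absurd (circlePt_eq_pPlus hc hs) hz
  · refine ⟨q + 1, ?_⟩
    rw [phiWarp_circlePt, phiWarp_circlePt, kGain_add_one]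
    exact one_sub_cos_add_warpAngle_neg_lt (abs_kGain q) hc hs
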